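/- arXiv:0810.0118 — 3 statements merged into one kernel-verified Lean document; each statement's English description precedes it below -/
import Mathlib

section
/- Let k and l be integers and let ℤ² act on the abelian group ℤ² so that the first standard generator acts by (x, y) ↦ (x + k·y, y) and the second standard generator acts by (x, y) ↦ (x + l·y, y). Then the second group cohomology H²(ℤ², ℤ²) with coefficients in this module is isomorphic, as an abelian group, to ℤ/gcd(k,l)ℤ × ℤ. -/
/-!
Sending a 2-cocycle `f` to `f(e₁, e₂) - f(e₂, e₁)` identifies `H²(ℤ², A)` with the coinvariants
`A ⧸ ((ρ e₁ - 1) A + (ρ e₂ - 1) A)`. Changing `f` by the coboundary of `x` changes this value by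
`(ρ e₁ - 1) (x e₂) - (ρ e₂ - 1) (x e₁)`, and conversely a cocycle with `f(e₁, e₂) = f(e₂, e₁)` is a
coboundary: the lifts of `e₁` and `e₂` to the extension classified by `f` commute, so they define
a splitting of that extension. For the unipotent action both `ρ eᵢ - 1` map `(x, y)` to multiples
of `(y, 0)`, so the coinvariants are `ℤ/gcd(k, l) × ℤ`, and two explicit cocycles realise every value.
-/

open Multiplicative

local notation "e₁" => Multiplicative.ofAdd ((1 : ℤ), (0 : ℤ))
local notation "e₂" => Multiplicative.ofAdd ((0 : ℤ), (1 : ℤ))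

lemma Ring.choose_two_add {R : Type*} [CommRing R] [BinomialRing R] (r s : R) :
    Ring.choose (r + s) 2 = Ring.choose r 2 + Ring.choose s 2 + r * s := by
  rw [Ring.add_choose_eq 2 (Commute.all r s)]
  simp [Finset.Nat.antidiagonal_succ]
  ring

namespace MonoidHom

lemma ext_mint_prod {M : Type*} [Monoid M] {φ ψ : Multiplicative (ℤ × ℤ) →* M}
    (h₁ : φ e₁ = ψ e₁) (h₂ : φ e₂ = ψ e₂) : φ = ψ := by
  have hinl := ext_mint (f := φ.comp (AddMonoidHom.inl ℤ ℤ).toMultiplicative)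
    (g := ψ.comp (AddMonoidHom.inl ℤ ℤ).toMultiplicative) h₁
  have hinr := ext_mint (f := φ.comp (AddMonoidHom.inr ℤ ℤ).toMultiplicative)
    (g := ψ.comp (AddMonoidHom.inr ℤ ℤ).toMultiplicative) h₂
  refine MonoidHom.ext fun x => ?_
  have hx : x = ofAdd (x.toAdd.1, 0) * ofAdd (0, x.toAdd.2) := by simp [← ofAdd_add]
  rw [hx, map_mul, map_mul]
  exact congr($(DFunLike.congr_fun hinl (ofAdd x.toAdd.1)) *
    $(DFunLike.congr_fun hinr (ofAdd x.toAdd.2)))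

def ofCommute {H : Type*} [Group H] {x y : H} (hxy : Commute x y) :
    Multiplicative (ℤ × ℤ) →* H :=
  (noncommCoprod (zpowersHom H x) (zpowersHom H y) fun _ _ => hxy.zpow_zpow _ _).comp
    (MulEquiv.prodMultiplicative ℤ ℤ).toMonoidHom

@[simp] lemma ofCommute_apply {H : Type*} [Group H] {x y : H} (hxy : Commute x y)
    (g : Multiplicative (ℤ × ℤ)) : ofCommute hxy g = x ^ g.toAdd.1 * y ^ g.toAdd.2 :=
  rfl

end MonoidHom

namespace groupCohomology

universe u

section AnyGroup

variable {k G : Type u} [CommRing k] [Group G] {A : Rep k G}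

noncomputable def H2LinearEquivOfSurjective {M : Type*} [AddCommGroup M] [Module k M]
    (Φ : cocycles₂ A →ₗ[k] M) (hΦ : Function.Surjective Φ)
    (hker : ∀ f, Φ f = 0 ↔ ⇑f ∈ coboundaries₂ A) : H2 A ≃ₗ[k] M :=
  have hπ : Function.Surjective (H2π A).hom := fun x => H2_induction_on x fun f => ⟨f, rfl⟩
  ((H2π A).hom.quotKerEquivOfSurjective hπ).symm.trans <|
    (Submodule.quotEquivOfEq _ _ <| by
      ext f; rw [LinearMap.mem_ker, LinearMap.mem_ker, hker]; exact H2π_eq_zero_iff f).trans <|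
      Φ.quotKerEquivOfSurjective hΦ

def swapSub (g h : G) : cocycles₂ A →ₗ[k] A :=
  (LinearMap.proj (R := k) (φ := fun _ : G × G => A) (g, h) - LinearMap.proj (h, g)) ∘ₗ
    (cocycles₂ A).subtype

@[simp] lemma swapSub_apply (g h : G) (f : cocycles₂ A) :
    swapSub g h f = f (g, h) - f (h, g) :=
  rfl

lemma d₁₂_apply_sub_d₁₂_apply_swap (x : G → A) {g h : G} (hgh : Commute g h) :
    (d₁₂ A).hom x (g, h) - (d₁₂ A).hom x (h, g) =
      (A.ρ g (x h) - x h) - (A.ρ h (x g) - x g) := by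
  simp only [d₁₂_hom_apply, hgh.eq]
  abel

/-- The unit is `(-f (1, 1), 1)`, since `f` need not be normalised. -/
@[ext]
structure CocycleExtension (f : cocycles₂ A) where
  fiber : A
  base : G

namespace CocycleExtension

variable {f : cocycles₂ A}

instance : Mul (CocycleExtension f) :=
  ⟨fun x y => ⟨x.fiber + A.ρ x.base y.fiber + f (x.base, y.base), x.base * y.base⟩⟩

instance : One (CocycleExtension f) := ⟨⟨-f (1, 1), 1⟩⟩

instance : Inv (CocycleExtension f) :=
  ⟨fun x => ⟨-A.ρ x.base⁻¹ x.fiber - f (x.base⁻¹, x.base) - f (1, 1), x.base⁻¹⟩⟩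

@[simp] lemma fiber_mul (x y : CocycleExtension f) :
    (x * y).fiber = x.fiber + A.ρ x.base y.fiber + f (x.base, y.base) :=
  rfl

@[simp] lemma base_mul (x y : CocycleExtension f) : (x * y).base = x.base * y.base := rfl

instance : Group (CocycleExtension f) :=
  Group.ofLeftAxioms
    (fun x y z => by
      have hf := (mem_cocycles₂_iff f).1 f.2 x.base y.base z.base
      refine CocycleExtension.ext ?_ (mul_assoc _ _ _)
      simp only [fiber_mul, base_mul, map_add, map_mul, Module.End.mul_apply]
      rw [← sub_eq_zero, ← sub_eq_zero.2 hf]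
      abel)
    (fun x => CocycleExtension.ext (by
      change -f (1, 1) + A.ρ 1 x.fiber + f (1, x.base) = x.fiber
      rw [map_one, Module.End.one_apply, cocycles₂_map_one_fst f x.base]
      abel) (one_mul _))
    (fun x => CocycleExtension.ext (by
      change (-A.ρ x.base⁻¹ x.fiber - f (x.base⁻¹, x.base) - f (1, 1)) +
        A.ρ x.base⁻¹ x.fiber + f (x.base⁻¹, x.base) = -f (1, 1)
      abel) (inv_mul_cancel _))

@[simps]
def baseHom : CocycleExtension f →* G where
  toFun := base
  map_one' := rfl
  map_mul' _ _ := rfl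

end CocycleExtension

lemma mem_coboundaries₂_of_section (f : cocycles₂ A) (s : G →* CocycleExtension f)
    (hs : ∀ g, (s g).base = g) : ⇑f ∈ coboundaries₂ A := by
  refine ⟨fun g => -(s g).fiber, funext fun ⟨g, h⟩ => ?_⟩
  have hmul := congrArg CocycleExtension.fiber (s.map_mul g h)
  simp only [CocycleExtension.fiber_mul, hs] at hmul
  simp only [d₁₂_hom_apply, map_neg, hmul]
  abel

end AnyGroup

variable {k : Type} [CommRing k] {A : Rep k (Multiplicative (ℤ × ℤ))}

lemma mem_coboundaries₂_of_apply_swap_eq (f : cocycles₂ A) (hf : f (e₁, e₂) = f (e₂, e₁)) :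
    ⇑f ∈ coboundaries₂ A := by
  let x : CocycleExtension f := ⟨0, e₁⟩
  let y : CocycleExtension f := ⟨0, e₂⟩
  have hxy : Commute x y := CocycleExtension.ext (by simp [x, y, hf]) (mul_comm _ _)
  have hbase : CocycleExtension.baseHom.comp (MonoidHom.ofCommute hxy) = MonoidHom.id _ :=
    MonoidHom.ext_mint_prod (by simp [x]) (by simp [y])
  exact mem_coboundaries₂_of_section f (MonoidHom.ofCommute hxy) (DFunLike.congr_fun hbase)

theorem mem_coboundaries₂_iff_exists (f : cocycles₂ A) :
    ⇑f ∈ coboundaries₂ A ↔ ∃ u v : A, swapSub e₁ e₂ f = (A.ρ e₁ u - u) + (A.ρ e₂ v - v) := by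
  constructor
  · rintro ⟨x, hx⟩
    refine ⟨x e₂, -x e₁, ?_⟩
    rw [swapSub_apply, ← hx, d₁₂_apply_sub_d₁₂_apply_swap x (Commute.all _ _), map_neg]
    abel
  · rintro ⟨u, v, huv⟩
    classical
    let x : Multiplicative (ℤ × ℤ) → A := Function.update (fun _ => u) e₁ (-v)
    let f' : cocycles₂ A := f - ⟨(d₁₂ A).hom x, d₁₂_apply_mem_cocycles₂ x⟩
    have hf' : ⇑f' ∈ coboundaries₂ A := by
      refine mem_coboundaries₂_of_apply_swap_eq f' ?_
      have hd := d₁₂_apply_sub_d₁₂_apply_swap x (Commute.all e₁ e₂)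
      simp only [x, Function.update_self, Function.update_of_ne (by decide : e₂ ≠ e₁)] at hd
      change f (e₁, e₂) - (d₁₂ A).hom x (e₁, e₂) = f (e₂, e₁) - (d₁₂ A).hom x (e₂, e₁)
      rw [sub_eq_sub_iff_sub_eq_sub, hd, ← swapSub_apply, huv, map_neg]
      abel
    have hf : ⇑f = ⇑f' + (d₁₂ A).hom x := (sub_add_cancel (⇑f) _).symm
    rw [hf]
    exact add_mem hf' (LinearMap.mem_range_self _ x)

end groupCohomology

open groupCohomology

/-- `g = ofAdd (m, n)` acts by the matrix `[[1, k m + l n], [0, 1]]`. -/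
def unipotentRep (k l : ℤ) : Representation ℤ (Multiplicative (ℤ × ℤ)) (ℤ × ℤ) where
  toFun g := LinearMap.id +
    (k * g.toAdd.1 + l * g.toAdd.2) • (LinearMap.inl ℤ ℤ ℤ ∘ₗ LinearMap.snd ℤ ℤ ℤ)
  map_one' := by ext <;> simp
  map_mul' g h := by ext <;> simp; ring

@[simp] lemma unipotentRep_apply (k l : ℤ) (g : Multiplicative (ℤ × ℤ)) (v : ℤ × ℤ) :
    unipotentRep k l g v = (v.1 + (k * g.toAdd.1 + l * g.toAdd.2) * v.2, v.2) := by
  ext <;> simp [unipotentRep]; ring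

namespace unipotentRep

variable {k l : ℤ}

lemma eq_of_apply_generators {ρ : Representation ℤ (Multiplicative (ℤ × ℤ)) (ℤ × ℤ)}
    (h1 : ∀ v : ℤ × ℤ, ρ e₁ v = (v.1 + k * v.2, v.2))
    (h2 : ∀ v : ℤ × ℤ, ρ e₂ v = (v.1 + l * v.2, v.2)) : ρ = unipotentRep k l :=
  MonoidHom.ext_mint_prod (LinearMap.ext fun v => by simp [h1])
    (LinearMap.ext fun v => by simp [h2])

def cocycleFst : cocycles₂ (Rep.of (unipotentRep k l)) :=
  ⟨fun p => (p.1.toAdd.1 * p.2.toAdd.2, 0), (mem_cocycles₂_iff _).2 fun g h j => by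
    ext <;> simp; ring⟩

/-- The second coordinate is minus the cup product of the two coordinate characters; the first
is a cochain whose coboundary cancels the action on that second coordinate. -/
def cocycleSnd : cocycles₂ (Rep.of (unipotentRep k l)) :=
  ⟨fun p => (k * (p.1.toAdd.1 * p.2.toAdd.1 * p.2.toAdd.2
        + Ring.choose p.1.toAdd.1 2 * p.2.toAdd.2) - l * Ring.choose p.1.toAdd.2 2 * p.2.toAdd.1,
      -(p.1.toAdd.2 * p.2.toAdd.1)),
    (mem_cocycles₂_iff _).2 fun g h j => by
      ext <;> simp [Ring.choose_two_add] <;> ring⟩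

lemma swapSub_cocycleFst : swapSub e₁ e₂ (cocycleFst (k := k) (l := l)) = (1, 0) := rfl

lemma swapSub_cocycleSnd : swapSub e₁ e₂ (cocycleSnd (k := k) (l := l)) = (0, 1) := by
  change ((_, _) : ℤ × ℤ) - ((_, _) : ℤ × ℤ) = _
  have h : Ring.choose (1 : ℤ) 2 = 0 := by simpa using Ring.choose_natCast (R := ℤ) 1 2
  simp [h]

lemma swapSub_surjective :
    Function.Surjective (swapSub (A := Rep.of (unipotentRep k l)) e₁ e₂) := fun v =>
  ⟨v.1 • cocycleFst + v.2 • cocycleSnd, by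
    rw [map_add, map_smul, map_smul, swapSub_cocycleFst, swapSub_cocycleSnd]
    ext <;> simp⟩

lemma exists_eq_add_iff (v : ℤ × ℤ) :
    (∃ u w : ℤ × ℤ, v = (unipotentRep k l e₁ u - u) + (unipotentRep k l e₂ w - w)) ↔
      (v.1 : ZMod (k.gcd l)) = 0 ∧ v.2 = 0 := by
  simp [Prod.ext_iff, ZMod.intCast_zmod_eq_zero_iff_dvd, Int.coe_gcd, gcd_dvd_iff_exists]

end unipotentRep

/-- Let `k, l : ℤ` and let `ℤ²` act on `ℤ²` so that the first standard
generator acts by `(x, y) ↦ (x + k·y, y)` and the second by `(x, y) ↦ (x + l·y, y)`.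
Then the second group cohomology `H²(ℤ², ℤ²)` with coefficients in this module is
isomorphic, as an abelian group, to `ℤ/gcd(k,l)ℤ × ℤ` (with `ZMod 0 = ℤ` covering the
case `gcd(k,l) = 0`). -/
theorem groupCohomology_two_torus_bundle (k l : ℤ)
    (ρ : Representation ℤ (Multiplicative (ℤ × ℤ)) (ℤ × ℤ))
    (h1 : ∀ v : ℤ × ℤ, ρ (Multiplicative.ofAdd ((1 : ℤ), (0 : ℤ))) v = (v.1 + k * v.2, v.2))
    (h2 : ∀ v : ℤ × ℤ, ρ (Multiplicative.ofAdd ((0 : ℤ), (1 : ℤ))) v = (v.1 + l * v.2, v.2)) :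
    Nonempty ((groupCohomology (Rep.of ρ) 2) ≃+ (ZMod (Int.gcd k l) × ℤ)) := by
  obtain rfl := unipotentRep.eq_of_apply_generators h1 h2
  let reduce : ℤ × ℤ →ₗ[ℤ] ZMod (Int.gcd k l) × ℤ :=
    (Int.castAddHom _).toIntLinearMap.prodMap LinearMap.id
  have hreduce : Function.Surjective reduce :=
    Function.Surjective.prodMap ZMod.intCast_surjective Function.surjective_id
  refine ⟨(H2LinearEquivOfSurjective (reduce ∘ₗ swapSub e₁ e₂)
    (hreduce.comp unipotentRep.swapSub_surjective) fun f => ?_).toAddEquiv⟩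
  rw [mem_coboundaries₂_iff_exists, Rep.of_ρ, unipotentRep.exists_eq_add_iff]
  simp [reduce, Prod.ext_iff]
end

section
/- Every continuous map f : 𝕋 × 𝕋 → 𝕋 from the 2-torus to the circle is homotopic to a map of the form (z₁, z₂) ↦ z₁^k · z₂^l for some integers k and l. -/
/-!
Pull `f` back along the universal covering `(s, t) ↦ (exp s, exp t)` of the torus and lift it to
a continuous `F : ℝ × ℝ → ℝ`. Translating by `2π` in either variable changes `F` by constants
`2πk` and `2πl`, since two lifts of the same map on a connected space differ by a constant deck
transformation. Hence `F (s, t) - k s - l t` is doubly periodic and descends to `φ : 𝕋 × 𝕋 → ℝ`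
with `f = exp ∘ φ · z₁ ^ k z₂ ^ l`, and contracting `φ` linearly to `0` gives the homotopy.
-/

open Real Topology ContinuousMap

namespace Circle

theorem exists_continuousMap_lift {A : Type*} [TopologicalSpace A] [SimplyConnectedSpace A]
    [LocallyPathConnectedSpace A] (g : C(A, Circle)) : ∃ G : C(A, ℝ), exp.comp G = g := by
  have a₀ : A := Classical.arbitrary A
  obtain ⟨G, -, hG⟩ :=
    (isCoveringMap_exp.existsUnique_continuousMap_lifts g a₀ _ (exp_arg (g a₀))).exists
  exact ⟨G, ContinuousMap.ext (congrFun hG)⟩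

theorem exists_int_eq_add_of_exp_eq {A : Type*} [TopologicalSpace A] [PreconnectedSpace A]
    [Nonempty A] {G H : A → ℝ} (hG : Continuous G) (hH : Continuous H)
    (h : ∀ a, exp (G a) = exp (H a)) : ∃ n : ℤ, ∀ a, G a = H a + n * (2 * π) := by
  have a₀ : A := Classical.arbitrary A
  obtain ⟨n, hn⟩ := exp_eq_exp.1 (h a₀)
  refine ⟨n, congrFun (isCoveringMap_exp.eq_of_comp_eq hG (by fun_prop) ?_ a₀ hn)⟩
  ext1 a
  simp [h a]

end Circle

namespace ContinuousMap.Homotopic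

variable {X : Type*} [TopologicalSpace X]

theorem mul {M : Type*} [TopologicalSpace M] [Mul M] [ContinuousMul M] {f₀ f₁ g₀ g₁ : C(X, M)}
    (hf : f₀.Homotopic f₁) (hg : g₀.Homotopic g₁) : (f₀ * g₀).Homotopic (f₁ * g₁) :=
  (Homotopic.refl ⟨fun p : M × M => p.1 * p.2, continuous_mul⟩).comp (hf.prodMk hg)

theorem circleExp_comp_one (φ : C(X, ℝ)) : (Circle.exp.comp φ).Homotopic 1 := by
  simpa using (Homotopic.refl Circle.exp).comp ⟨Homotopy.affine φ 0⟩

end ContinuousMap.Homotopic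

noncomputable def torusExp : C(ℝ × ℝ, Circle × Circle) := Circle.exp.prodMap Circle.exp

theorem isQuotientMap_torusExp : IsQuotientMap torusExp :=
  (isLocalHomeomorph_circleExp.isOpenMap.prodMap
    isLocalHomeomorph_circleExp.isOpenMap).isQuotientMap
      torusExp.continuous (Circle.exp_surjective.prodMap Circle.exp_surjective)

theorem exists_comp_torusExp_eq {Φ : C(ℝ × ℝ, ℝ)} (h₁ : ∀ s t, Φ (s + 2 * π, t) = Φ (s, t))
    (h₂ : ∀ s t, Φ (s, t + 2 * π) = Φ (s, t)) :
    ∃ φ : C(Circle × Circle, ℝ), φ.comp torusExp = Φ := by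
  refine ⟨isQuotientMap_torusExp.lift Φ ?_, isQuotientMap_torusExp.lift_comp Φ _⟩
  rintro ⟨s, t⟩ ⟨s', t'⟩ h
  obtain ⟨m, rfl⟩ := Circle.exp_eq_exp.1 (congrArg Prod.fst h)
  obtain ⟨n, rfl⟩ := Circle.exp_eq_exp.1 (congrArg Prod.snd h)
  calc Φ (s' + m * (2 * π), t' + n * (2 * π)) = Φ (s', t' + n * (2 * π)) :=
        Function.Periodic.int_mul (f := fun s => Φ (s, _)) (fun s => h₁ s _) m s'
    _ = Φ (s', t') := Function.Periodic.int_mul (f := fun t => Φ (s', t)) (h₂ s') n t'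

theorem exists_int_lift_add_two_pi_eq {f : C(Circle × Circle, Circle)} {F : C(ℝ × ℝ, ℝ)}
    (hF : Circle.exp.comp F = f.comp torusExp) :
    ∃ k l : ℤ, ∀ s t, F (s + 2 * π, t) = F (s, t) + k * (2 * π) ∧
      F (s, t + 2 * π) = F (s, t) + l * (2 * π) := by
  have hF' (s t : ℝ) : Circle.exp (F (s, t)) = f (Circle.exp s, Circle.exp t) :=
    DFunLike.congr_fun hF (s, t)
  obtain ⟨k, hk⟩ := Circle.exists_int_eq_add_of_exp_eq (G := fun x => F (x.1 + 2 * π, x.2))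
    (by fun_prop) F.continuous fun x => by simp [hF']
  obtain ⟨l, hl⟩ := Circle.exists_int_eq_add_of_exp_eq (G := fun x => F (x.1, x.2 + 2 * π))
    (by fun_prop) F.continuous fun x => by simp [hF']
  exact ⟨k, l, fun s t => ⟨hk (s, t), hl (s, t)⟩⟩

theorem exists_eq_circleExp_comp_mul_monomial (f : C(Circle × Circle, Circle)) :
    ∃ (k l : ℤ) (φ : C(Circle × Circle, ℝ)),
      f = Circle.exp.comp φ * ⟨fun p : Circle × Circle => p.1 ^ k * p.2 ^ l, by fun_prop⟩ := by
  obtain ⟨F, hF⟩ := Circle.exists_continuousMap_lift (f.comp torusExp)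
  obtain ⟨k, l, hkl⟩ := exists_int_lift_add_two_pi_eq hF
  let Φ : C(ℝ × ℝ, ℝ) := ⟨fun x => F x - k * x.1 - l * x.2, by fun_prop⟩
  obtain ⟨φ, hφ⟩ := exists_comp_torusExp_eq (Φ := Φ)
    (fun s t => by simp only [Φ, coe_mk, (hkl s t).1]; ring)
    (fun s t => by simp only [Φ, coe_mk, (hkl s t).2]; ring)
  refine ⟨k, l, φ, ContinuousMap.ext fun ⟨z, w⟩ => ?_⟩
  obtain ⟨s, rfl⟩ := Circle.exp_surjective z
  obtain ⟨t, rfl⟩ := Circle.exp_surjective w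
  have hφst : φ (Circle.exp s, Circle.exp t) = F (s, t) - k * s - l * t :=
    DFunLike.congr_fun hφ (s, t)
  have hFst : Circle.exp (F (s, t)) = f (Circle.exp s, Circle.exp t) :=
    DFunLike.congr_fun hF (s, t)
  simp only [mul_apply, comp_apply, coe_mk, hφst, Circle.exp_sub, Circle.exp_intCast_mul, hFst]
  rw [div_div, div_mul_cancel]

/-- Every continuous map `f : 𝕋 × 𝕋 → 𝕋` from the 2-torus to the circle
is homotopic to a map of the form `(z₁, z₂) ↦ z₁^k · z₂^l` for some integers `k` and `l`. -/
theorem torus_to_circle_homotopic_to_monomial (f : C(Circle × Circle, Circle)) :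
    ∃ k l : ℤ, f.Homotopic
      ⟨fun p : Circle × Circle => p.1 ^ k * p.2 ^ l, by fun_prop⟩ := by
  obtain ⟨k, l, φ, rfl⟩ := exists_eq_circleExp_comp_mul_monomial f
  exact ⟨k, l, by simpa using (Homotopic.circleExp_comp_one φ).mul (.refl _)⟩
end

section
/- Let n ≥ 2 and let Hₙ be the group presented by generators g₁, …, gₙ and f_{ij} for 1 ≤ i < j ≤ n, with relations gᵢgⱼ = f_{ij}gⱼgᵢ for all 1 ≤ i < j ≤ n and with each f_{ij} commuting with all generators. Then the center of Hₙ equals the subgroup Zₙ generated by the elements f_{ij}, 1 ≤ i < j ≤ n, and this subgroup is a free abelian group of rank n(n−1)/2, i.e., Zₙ ≅ ℤ^{n(n−1)/2}. -/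
/-- Index type for the pairs `1 ≤ i < j ≤ n`. -/
abbrev HeisenbergPairs (n : ℕ) := {p : Fin n × Fin n // p.1 < p.2}

/-- Generators of the group `Hₙ`: the `gᵢ` (left summand) and the `f_{ij}` (right summand). -/
abbrev HeisenbergGen (n : ℕ) := Fin n ⊕ HeisenbergPairs n

/-- Relations of `Hₙ`: `gᵢgⱼgᵢ⁻¹gⱼ⁻¹f_{ij}⁻¹` for `i < j`, together with the commutators of
each `f_{ij}` with every generator. -/
def heisenbergRels (n : ℕ) : Set (FreeGroup (HeisenbergGen n)) :=
  {r | (∃ p : HeisenbergPairs n,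
        r = FreeGroup.of (Sum.inl p.1.1) * FreeGroup.of (Sum.inl p.1.2) *
          (FreeGroup.of (Sum.inl p.1.1))⁻¹ * (FreeGroup.of (Sum.inl p.1.2))⁻¹ *
          (FreeGroup.of (Sum.inr p))⁻¹) ∨
      (∃ (p : HeisenbergPairs n) (s : HeisenbergGen n),
        r = FreeGroup.of (Sum.inr p) * FreeGroup.of s *
          (FreeGroup.of (Sum.inr p))⁻¹ * (FreeGroup.of s)⁻¹)}

/-- The group `Hₙ`, presented by generators `g₁, …, gₙ, f_{ij}` with relations
`gᵢgⱼ = f_{ij}gⱼgᵢ` (for `i < j`) and each `f_{ij}` central. -/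
def HeisenbergGroup (n : ℕ) := PresentedGroup (heisenbergRels n)

instance (n : ℕ) : Group (HeisenbergGroup n) := by unfold HeisenbergGroup; infer_instance

/-- The subgroup `Zₙ` of `Hₙ` generated by the elements `f_{ij}`, `1 ≤ i < j ≤ n`. -/
def heisenbergCenterSubgroup (n : ℕ) : Subgroup (HeisenbergGroup n) :=
  Subgroup.closure
    (Set.range fun p : HeisenbergPairs n =>
      (PresentedGroup.of (Sum.inr p) : PresentedGroup (heisenbergRels n)))

/-! `Hₙ` maps onto the group of symbols `⟨a, c⟩ ∈ ℤⁿ × ℤ^{pairs}` multiplied by the rule forced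
by `g_j^x g_i^y = f_{ij}^{-xy} g_i^y g_j^x`. Modulo `Zₙ` the generators commute, so `Hₙ/Zₙ` is
abelian, generated by the `gᵢ`, and `a` identifies it with `ℤⁿ`: thus `Zₙ` is the kernel of `a`.
A central element has `a = 0`, since in the model its commutator with `g_k` has `f_{ij}`-coordinate
`δ_{kj} aᵢ - δ_{ki} aⱼ` and for `n ≥ 2` every index lies in a pair. In the same way `c` identifies
the abelian group `Zₙ`, generated by the `f_{ij}`, with `ℤ^{pairs}`. -/

open Subgroup

section GeneratedCommGroup

variable {G : Type*} [Group G]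

theorem Subgroup.center_eq_top_of_closure_eq_top {s : Set G} (hs : closure s = ⊤)
    (hcomm : ∀ x ∈ s, ∀ y ∈ s, x * y = y * x) : center G = ⊤ := by
  rw [center_eq_iInf hs, eq_top_iff]
  refine le_iInf₂ fun g hg => ?_
  rw [← hs, closure_le]
  exact fun h hh => mem_centralizer_singleton_iff.2 (hcomm h hh g hg)

open scoped IsMulCommutative in
theorem MonoidHom.bijective_of_map_eq_single {ι : Type*} [Fintype ι] [DecidableEq ι]
    [IsMulCommutative G] {q : ι → G} (hq : closure (Set.range q) = ⊤)
    (β : G →* Multiplicative (ι → ℤ)) (hβ : ∀ i, β (q i) = .ofAdd (Pi.single i 1)) :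
    Function.Bijective β := by
  have hβq (a : ι → ℤ) : β (∏ i, q i ^ a i) = .ofAdd a := by
    simp only [map_prod, map_zpow, hβ, ← ofAdd_zsmul, ← ofAdd_sum]
    rw [← pi_eq_sum_univ']
  refine ⟨(injective_iff_map_eq_one β).2 fun x hx => ?_, fun a => ⟨_, hβq a.toAdd⟩⟩
  obtain ⟨a, rfl⟩ := exists_of_mem_closure_range q x (hq ▸ mem_top x)
  obtain rfl : a = 0 := by rw [hβq] at hx; exact hx
  simp

end GeneratedCommGroup

/-- `⟨a, c⟩` models `(∏ p, f_p ^ c p) * g₁ ^ a₁ * ⋯ * gₙ ^ aₙ`. -/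
@[ext] structure HeisenbergModel (n : ℕ) where
  a : Fin n → ℤ
  c : HeisenbergPairs n → ℤ

namespace HeisenbergModel

variable {n : ℕ}

instance : Mul (HeisenbergModel n) :=
  ⟨fun x y => ⟨x.a + y.a, fun p => x.c p + y.c p - x.a p.1.2 * y.a p.1.1⟩⟩

instance : One (HeisenbergModel n) := ⟨⟨0, 0⟩⟩

instance : Inv (HeisenbergModel n) :=
  ⟨fun x => ⟨-x.a, fun p => -x.c p - x.a p.1.2 * x.a p.1.1⟩⟩

@[simp] lemma mul_a (x y : HeisenbergModel n) : (x * y).a = x.a + y.a := rfl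
@[simp] lemma mul_c (x y : HeisenbergModel n) (p : HeisenbergPairs n) :
    (x * y).c p = x.c p + y.c p - x.a p.1.2 * y.a p.1.1 := rfl
@[simp] lemma one_a : (1 : HeisenbergModel n).a = 0 := rfl
@[simp] lemma one_c : (1 : HeisenbergModel n).c = 0 := rfl
@[simp] lemma inv_a (x : HeisenbergModel n) : x⁻¹.a = -x.a := rfl
@[simp] lemma inv_c (x : HeisenbergModel n) (p : HeisenbergPairs n) :
    x⁻¹.c p = -x.c p - x.a p.1.2 * x.a p.1.1 := rfl

instance : Group (HeisenbergModel n) where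
  mul_assoc x y z := by ext <;> simp only [mul_a, mul_c, Pi.add_apply] <;> ring
  one_mul x := by ext <;> simp
  mul_one x := by ext <;> simp
  inv_mul_cancel x := by
    ext <;> simp
    ring

def ofG (i : Fin n) : HeisenbergModel n := ⟨Pi.single i 1, 0⟩

def ofF (p : HeisenbergPairs n) : HeisenbergModel n := ⟨0, Pi.single p 1⟩

lemma ofF_mul_comm (p : HeisenbergPairs n) (y : HeisenbergModel n) : ofF p * y = y * ofF p := by
  ext <;> simp [ofF, add_comm]

lemma ofG_mul_ofG (p : HeisenbergPairs n) :
    ofG p.1.1 * ofG p.1.2 = ofF p * (ofG p.1.2 * ofG p.1.1) := by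
  obtain ⟨⟨i, j⟩, hij⟩ := p
  ext q
  · simp [ofG, ofF, add_comm]
  · obtain ⟨⟨u, v⟩, huv⟩ := q
    have hji : ¬ (v = i ∧ u = j) := fun ⟨rfl, rfl⟩ => lt_asymm hij huv
    simp only [ofG, ofF, mul_c, mul_a, Pi.single_apply, Subtype.mk.injEq, Prod.mk.injEq,
      Pi.zero_apply, zero_mul, zero_add]
    split_ifs <;> simp_all

lemma lift_eq_one_of_mem_heisenbergRels :
    ∀ r ∈ heisenbergRels n, FreeGroup.lift (Sum.elim ofG ofF) r = 1 := by
  rintro r (⟨p, rfl⟩ | ⟨p, s, rfl⟩)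
  · simp only [map_mul, map_inv, FreeGroup.lift_apply_of, Sum.elim_inl, Sum.elim_inr,
      ofG_mul_ofG]
    group
  · simp only [map_mul, map_inv, FreeGroup.lift_apply_of, Sum.elim_inr, ofF_mul_comm]
    group

def aHom : HeisenbergModel n →* Multiplicative (Fin n → ℤ) where
  toFun x := .ofAdd x.a
  map_one' := rfl
  map_mul' _ _ := rfl

lemma a_eq_zero_of_commute_ofG (hn : 2 ≤ n) {x : HeisenbergModel n}
    (hx : ∀ i, x * ofG i = ofG i * x) : x.a = 0 := by
  have key (k : Fin n) (p : HeisenbergPairs n) :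
      x.a p.1.2 * (Pi.single k 1 : Fin n → ℤ) p.1.1 =
        (Pi.single k 1 : Fin n → ℤ) p.1.2 * x.a p.1.1 := by
    have := congrArg (fun y => y.c p) (hx k)
    simp only [mul_c, ofG, Pi.zero_apply] at this
    linarith
  have : Nontrivial (Fin n) := Fin.nontrivial_iff_two_le.2 hn
  funext m
  obtain ⟨m', hm'⟩ := exists_ne m
  rcases hm'.lt_or_gt with h | h
  · simpa [h.ne] using key m' ⟨(m', m), h⟩
  · simpa [h.ne'] using (key m' ⟨(m, m'), h⟩).symm

end HeisenbergModel

namespace HeisenbergGroup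

open HeisenbergModel
open scoped commutatorElement

variable {n : ℕ}

abbrev of (s : HeisenbergGen n) : HeisenbergGroup n := PresentedGroup.of s

abbrev g (i : Fin n) : HeisenbergGroup n := of (.inl i)

abbrev f (p : HeisenbergPairs n) : HeisenbergGroup n := of (.inr p)

lemma closure_range_of : closure (Set.range (of (n := n))) = ⊤ :=
  PresentedGroup.closure_range_of _

lemma f_mul_comm (p : HeisenbergPairs n) (s : HeisenbergGen n) : f p * of s = of s * f p := by
  have : ⁅f p, of s⁆ = 1 := PresentedGroup.one_of_mem (Or.inr ⟨p, s, rfl⟩)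
  exact commutatorElement_eq_one_iff_mul_comm.1 this

lemma commutatorElement_g_g {i j : Fin n} (h : i < j) : ⁅g i, g j⁆ = f ⟨(i, j), h⟩ :=
  mul_inv_eq_one.1 (PresentedGroup.one_of_mem (Or.inl ⟨⟨(i, j), h⟩, rfl⟩))

lemma f_mem_center (p : HeisenbergPairs n) : f p ∈ center (HeisenbergGroup n) := by
  simp only [center_eq_iInf closure_range_of, mem_iInf, Set.forall_mem_range]
  exact fun s => mem_centralizer_singleton_iff.2 (f_mul_comm p s)

lemma heisenbergCenterSubgroup_le_center :
    heisenbergCenterSubgroup n ≤ center (HeisenbergGroup n) :=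
  closure_le _ |>.2 <| Set.range_subset_iff.2 f_mem_center

instance : (heisenbergCenterSubgroup n).Normal :=
  ⟨fun x hx y => by
    rw [mem_center_iff.1 (heisenbergCenterSubgroup_le_center hx) y, mul_inv_cancel_right]
    exact hx⟩

lemma f_mem_heisenbergCenterSubgroup (p : HeisenbergPairs n) : f p ∈ heisenbergCenterSubgroup n :=
  subset_closure ⟨p, rfl⟩

lemma commutatorElement_g_g_mem (i j : Fin n) : ⁅g i, g j⁆ ∈ heisenbergCenterSubgroup n := by
  rcases lt_trichotomy i j with h | rfl | h
  · exact commutatorElement_g_g h ▸ f_mem_heisenbergCenterSubgroup _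
  · exact commutatorElement_self (g i) ▸ one_mem _
  · rw [← commutatorElement_inv, commutatorElement_g_g h]
    exact inv_mem (f_mem_heisenbergCenterSubgroup _)

lemma closure_range_mk_g :
    closure (Set.range fun i => QuotientGroup.mk (s := heisenbergCenterSubgroup n) (g i)) = ⊤ := by
  rw [eq_top_iff, ← map_top_of_surjective _ (QuotientGroup.mk'_surjective _), ← closure_range_of,
    MonoidHom.map_closure, closure_le]
  rintro _ ⟨_, ⟨i | p, rfl⟩, rfl⟩
  · exact subset_closure ⟨i, rfl⟩
  · rw [QuotientGroup.mk'_apply, (QuotientGroup.eq_one_iff _).2 (f_mem_heisenbergCenterSubgroup p)]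
    exact one_mem _

instance : IsMulCommutative (HeisenbergGroup n ⧸ heisenbergCenterSubgroup n) := by
  rw [← center_eq_top_iff]
  refine center_eq_top_of_closure_eq_top closure_range_mk_g ?_
  rintro _ ⟨i, rfl⟩ _ ⟨j, rfl⟩
  exact commutatorElement_eq_one_iff_mul_comm.1 <|
    (QuotientGroup.eq_one_iff _).2 (commutatorElement_g_g_mem i j)

def toModel (n : ℕ) : HeisenbergGroup n →* HeisenbergModel n :=
  PresentedGroup.toGroup lift_eq_one_of_mem_heisenbergRels

@[simp] lemma toModel_g (i : Fin n) : toModel n (g i) = ofG i := PresentedGroup.toGroup.of _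

@[simp] lemma toModel_f (p : HeisenbergPairs n) : toModel n (f p) = ofF p :=
  PresentedGroup.toGroup.of _

def multidegree (n : ℕ) : HeisenbergGroup n →* Multiplicative (Fin n → ℤ) := aHom.comp (toModel n)

lemma multidegree_g (i : Fin n) : multidegree n (g i) = .ofAdd (Pi.single i 1) := by
  simp [multidegree, aHom, ofG]

lemma multidegree_f (p : HeisenbergPairs n) : multidegree n (f p) = 1 := by
  simp [multidegree, aHom, ofF]

lemma heisenbergCenterSubgroup_le_ker_multidegree :
    heisenbergCenterSubgroup n ≤ (multidegree n).ker :=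
  closure_le _ |>.2 <| Set.range_subset_iff.2 multidegree_f

lemma ker_multidegree : (multidegree n).ker = heisenbergCenterSubgroup n := by
  refine le_antisymm (fun x hx => ?_) heisenbergCenterSubgroup_le_ker_multidegree
  let β := QuotientGroup.lift _ (multidegree n) heisenbergCenterSubgroup_le_ker_multidegree
  have hβ : Function.Bijective β :=
    β.bijective_of_map_eq_single closure_range_mk_g fun i => multidegree_g i
  rw [← QuotientGroup.eq_one_iff]
  exact (injective_iff_map_eq_one β).1 hβ.1 _ hx

lemma center_le_heisenbergCenterSubgroup (hn : 2 ≤ n) :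
    center (HeisenbergGroup n) ≤ heisenbergCenterSubgroup n := by
  intro x hx
  have : (toModel n x).a = 0 := a_eq_zero_of_commute_ofG hn fun i => by
    rw [← toModel_g, ← map_mul, ← map_mul, mem_center_iff.1 hx (g i)]
  rw [← ker_multidegree, MonoidHom.mem_ker]
  exact congrArg Multiplicative.ofAdd this

instance : IsMulCommutative (heisenbergCenterSubgroup n) :=
  isMulCommutative_closure <| by
    rintro _ ⟨p, rfl⟩ y -
    exact (mem_center_iff.1 (f_mem_center p) y).symm

lemma closure_range_f_eq_top :
    closure (Set.range fun p => (⟨f p, f_mem_heisenbergCenterSubgroup p⟩ :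
      heisenbergCenterSubgroup n)) = ⊤ := by
  have : closure (((↑) : heisenbergCenterSubgroup n → HeisenbergGroup n) ⁻¹' Set.range f) = ⊤ :=
    closure_closure_coe_preimage
  rw [eq_top_iff, ← this, closure_le]
  rintro ⟨_, _⟩ ⟨p, rfl⟩
  exact subset_closure ⟨p, rfl⟩

def fExponents (n : ℕ) : heisenbergCenterSubgroup n →* Multiplicative (HeisenbergPairs n → ℤ) where
  toFun z := .ofAdd (toModel n z).c
  map_one' := by simp
  map_mul' z w := by
    have hz : (toModel n z).a = 0 := heisenbergCenterSubgroup_le_ker_multidegree z.2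
    ext p
    simp [hz]

noncomputable def heisenbergCenterSubgroupEquiv (n : ℕ) :
    heisenbergCenterSubgroup n ≃* Multiplicative (HeisenbergPairs n → ℤ) :=
  .ofBijective (fExponents n) <|
    (fExponents n).bijective_of_map_eq_single closure_range_f_eq_top fun p => by
      simp [fExponents, ofF]

end HeisenbergGroup

def HeisenbergPairs.equivSigma (n : ℕ) : HeisenbergPairs n ≃ Σ j : Fin n, Fin j where
  toFun p := ⟨p.1.2, ⟨p.1.1, p.2⟩⟩
  invFun s := ⟨(⟨s.2, s.2.2.trans s.1.2⟩, s.1), s.2.2⟩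

lemma HeisenbergPairs.card (n : ℕ) : Fintype.card (HeisenbergPairs n) = n * (n - 1) / 2 := by
  rw [Fintype.card_congr (equivSigma n), Fintype.card_sigma]
  simp only [Fintype.card_fin]
  rw [Fin.sum_univ_eq_sum_range (fun i => i), Finset.sum_range_id]

/-- For `n ≥ 2`, the center of `Hₙ` equals the subgroup `Zₙ` generated by
the elements `f_{ij}`, `1 ≤ i < j ≤ n`, and `Zₙ` is free abelian of rank `n(n−1)/2`. -/
theorem heisenberg_center_eq_and_free_abelian (n : ℕ) (hn : 2 ≤ n) :
    Subgroup.center (HeisenbergGroup n) = heisenbergCenterSubgroup n ∧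
    Nonempty ((heisenbergCenterSubgroup n) ≃* Multiplicative (Fin (n * (n - 1) / 2) → ℤ)) :=
  ⟨le_antisymm (HeisenbergGroup.center_le_heisenbergCenterSubgroup hn)
      HeisenbergGroup.heisenbergCenterSubgroup_le_center,
    ⟨(HeisenbergGroup.heisenbergCenterSubgroupEquiv n).trans <| AddEquiv.toMultiplicative <|
      .arrowCongr (Fintype.equivFinOfCardEq (HeisenbergPairs.card n)) (.refl ℤ)⟩⟩
end
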